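/- Let A be a weakly irreducible nonnegative tensor of order m and dimension n, and suppose a positive vector x ∈ ℝ^n_{++} and λ > 0 satisfy A x^{m-1} ≤ λ x^{[m-1]} componentwise with strict inequality in at least one coordinate. Then there exists a positive vector y with A y^{m-1} < λ y^{[m-1]} strictly in every coordinate, and consequently ρ(A) < λ. -/

import Mathlib

open Finset

noncomputable section

/-- `(A x^{m-1})_i` for a tensor of order `m'+1` and dimension `n`. -/
def tApply {n m' : ℕ} (A : Fin n → (Fin m' → Fin n) → ℝ) (x : Fin n → ℝ) (i : Fin n) : ℝ :=
  ∑ idx : Fin m' → Fin n, A i idx * ∏ k, x (idx k)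

/-- Complex version of `tApply`. -/
def tApplyC {n m' : ℕ} (A : Fin n → (Fin m' → Fin n) → ℝ) (x : Fin n → ℂ) (i : Fin n) : ℂ :=
  ∑ idx : Fin m' → Fin n, (A i idx : ℂ) * ∏ k, x (idx k)

/-- `lam` is an eigenvalue of the tensor `A`. -/
def IsEig {n m' : ℕ} (A : Fin n → (Fin m' → Fin n) → ℝ) (lam : ℂ) : Prop :=
  ∃ x : Fin n → ℂ, x ≠ 0 ∧ ∀ i, tApplyC A x i = lam * x i ^ m'

/-- The spectral radius of a tensor. -/
def specRad {n m' : ℕ} (A : Fin n → (Fin m' → Fin n) → ℝ) : ℝ :=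
  sSup {r | ∃ lam, IsEig A lam ∧ r = ‖lam‖}

/-- The majorization matrix `M_A` of a tensor `A`. -/
def major {n m' : ℕ} (A : Fin n → (Fin m' → Fin n) → ℝ) (i j : Fin n) : ℝ :=
  ∑ idx ∈ univ.filter (fun idx : Fin m' → Fin n => ∃ k, idx k = j), A i idx

/-- The majorization matrix of the principal sub-tensor `A_I`. -/
def subMajor {n m' : ℕ} (A : Fin n → (Fin m' → Fin n) → ℝ) (I : Finset (Fin n))
    (i j : Fin n) : ℝ :=
  ∑ idx ∈ univ.filter (fun idx : Fin m' → Fin n => (∃ k, idx k = j) ∧ ∀ k, idx k ∈ I),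
    A i idx

/-- Irreducibility of (the principal submatrix on `I` of) a nonnegative matrix. -/
def MatIrredOn {n : ℕ} (M : Fin n → Fin n → ℝ) (I : Finset (Fin n)) : Prop :=
  ∀ S ⊆ I, S.Nonempty → S ≠ I → ∃ i ∈ S, ∃ j ∈ I \ S, M i j ≠ 0

/-- A tensor is weakly irreducible if its majorization matrix is irreducible. -/
def WeaklyIrred {n m' : ℕ} (A : Fin n → (Fin m' → Fin n) → ℝ) : Prop :=
  MatIrredOn (major A) Finset.univ

/-- Weak irreducibility of the principal sub-tensor `A_I`. -/
def WeaklyIrredOn {n m' : ℕ} (A : Fin n → (Fin m' → Fin n) → ℝ) (I : Finset (Fin n)) : Prop :=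
  MatIrredOn (subMajor A I) I

/-- `(A_I e_I^{m-1})_i`, the action of the principal sub-tensor on the all-ones vector. -/
def subApplyOnes {n m' : ℕ} (A : Fin n → (Fin m' → Fin n) → ℝ) (I : Finset (Fin n))
    (i : Fin n) : ℝ :=
  ∑ idx ∈ univ.filter (fun idx : Fin m' → Fin n => ∀ k, idx k ∈ I), A i idx

/-- The spectral radius of the principal sub-tensor `A_I`. -/
def subSpecRad {n m' : ℕ} (A : Fin n → (Fin m' → Fin n) → ℝ) (I : Finset (Fin n)) : ℝ :=
  sSup {r | ∃ lam : ℂ, ∃ x : Fin n → ℂ, (∃ i ∈ I, x i ≠ 0) ∧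
    (∀ i ∈ I, (∑ idx ∈ univ.filter (fun idx : Fin m' → Fin n => ∀ k, idx k ∈ I),
      (A i idx : ℂ) * ∏ k, x (idx k)) = lam * x i ^ m') ∧ r = ‖lam‖}

/-!
Shrinking one coordinate `x j` at which `A x^{m-1} ≤ λ x^{[m-1]}` is strict, by a factor close
enough to `1`, keeps that coordinate strict, keeps every other inequality, and makes the inequality
strict at every `i` with `(M_A)_{ij} ≠ 0`. Weak irreducibility supplies such an `i` outside the set of
strict coordinates as long as that set is proper, so finitely many shrinkings make all coordinates
strict. Then `A y^{m-1} ≤ c y^{[m-1]}` for some `c < λ`, and comparing an eigenvector `z` with `y` at a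
coordinate maximising `|z_i| / y_i` bounds every eigenvalue by `c`.
-/

open Topology in
theorem exists_pos_lt_one_lt_pow {r : ℝ} (hr : r < 1) (m : ℕ) :
    ∃ s : ℝ, 0 < s ∧ s < 1 ∧ r < s ^ m := by
  have hpow : ∀ᶠ s in 𝓝[<] (1 : ℝ), r < s ^ m :=
    (((continuous_pow m).tendsto' 1 1 (one_pow m)).mono_left nhdsWithin_le_nhds).eventually
      (lt_mem_nhds hr)
  obtain ⟨s, hrs, hs0, hs1⟩ := (hpow.and (Ioo_mem_nhdsLT zero_lt_one)).exists
  exact ⟨s, hs0, hs1, hrs⟩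

theorem exists_le_lt_forall_le {ι α : Type*} [Fintype ι] [LinearOrder α] {f : ι → α} {a b : α}
    (hab : a < b) (hf : ∀ i, f i < b) : ∃ c, a ≤ c ∧ c < b ∧ ∀ i, f i ≤ c := by
  classical
  let s := insert a (univ.image f)
  have hs : s.Nonempty := insert_nonempty _ _
  refine ⟨s.max' hs, s.le_max' a (mem_insert_self _ _), (s.max'_lt_iff hs).2 ?_,
    fun i => s.le_max' (f i) (mem_insert_of_mem (mem_image_of_mem f (mem_univ i)))⟩
  simpa [s, hab] using hf

section Tensor

variable {n m' : ℕ} {A : Fin n → (Fin m' → Fin n) → ℝ}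

theorem tApply_nonneg (hA : ∀ i idx, 0 ≤ A i idx) {x : Fin n → ℝ} (hx : ∀ i, 0 ≤ x i)
    (i : Fin n) : 0 ≤ tApply A x i :=
  sum_nonneg fun idx _ => mul_nonneg (hA i idx) (prod_nonneg fun _ _ => hx _)

theorem tApply_mono (hA : ∀ i idx, 0 ≤ A i idx) {x y : Fin n → ℝ} (hy : ∀ i, 0 ≤ y i)
    (hyx : ∀ i, y i ≤ x i) (i : Fin n) : tApply A y i ≤ tApply A x i :=
  sum_le_sum fun idx _ =>
    mul_le_mul_of_nonneg_left (prod_le_prod (fun _ _ => hy _) fun _ _ => hyx _) (hA i idx)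

theorem tApply_lt_of_major_ne_zero (hA : ∀ i idx, 0 ≤ A i idx) {x y : Fin n → ℝ}
    (hy : ∀ i, 0 < y i) (hyx : ∀ i, y i ≤ x i) {i j : Fin n} (hyxj : y j < x j)
    (hij : major A i j ≠ 0) : tApply A y i < tApply A x i := by
  obtain ⟨idx, hidx, hA0⟩ := exists_ne_zero_of_sum_ne_zero hij
  obtain ⟨k, hk⟩ := (mem_filter.mp hidx).2
  have hprod : ∏ k, y (idx k) < ∏ k, x (idx k) :=
    prod_lt_prod (fun _ _ => hy _) (fun _ _ => hyx _) ⟨k, mem_univ _, hk ▸ hyxj⟩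
  exact sum_lt_sum
    (fun idx _ => mul_le_mul_of_nonneg_left
      (prod_le_prod (fun _ _ => (hy _).le) fun _ _ => hyx _) (hA i idx))
    ⟨idx, mem_univ _, mul_lt_mul_of_pos_left hprod ((hA i idx).lt_of_ne' hA0)⟩

theorem tApply_smul (t : ℝ) (x : Fin n → ℝ) (i : Fin n) :
    tApply A (t • x) i = t ^ m' * tApply A x i := by
  simp only [tApply, Pi.smul_apply, smul_eq_mul, prod_mul_distrib, prod_const, card_univ,
    Fintype.card_fin, mul_sum]
  exact sum_congr rfl fun idx _ => by ring

theorem norm_tApplyC_le (hA : ∀ i idx, 0 ≤ A i idx) (z : Fin n → ℂ) (i : Fin n) :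
    ‖tApplyC A z i‖ ≤ tApply A (fun k => ‖z k‖) i :=
  (norm_sum_le _ _).trans_eq <| sum_congr rfl fun idx _ => by
    rw [norm_mul, norm_prod, Complex.norm_real, Real.norm_of_nonneg (hA i idx)]

def strictSet (A : Fin n → (Fin m' → Fin n) → ℝ) (lam : ℝ) (x : Fin n → ℝ) : Finset (Fin n) :=
  univ.filter fun i => tApply A x i < lam * x i ^ m'

theorem mem_strictSet {lam : ℝ} {x : Fin n → ℝ} {i : Fin n} :
    i ∈ strictSet A lam x ↔ tApply A x i < lam * x i ^ m' := by
  simp [strictSet]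

theorem WeaklyIrred.exists_major_ne_zero (hirr : WeaklyIrred A) {S : Finset (Fin n)}
    (hS : S.Nonempty) (hSu : S ≠ univ) : ∃ i ∉ S, ∃ j ∈ S, major A i j ≠ 0 := by
  obtain ⟨i, hi, j, hj, hij⟩ :=
    hirr Sᶜ (subset_univ _) ((compl_ne_univ_iff_nonempty _).1 (by simpa using hSu))
      ((compl_ne_univ_iff_nonempty _).2 hS)
  exact ⟨i, mem_compl.1 hi, j, by simpa using hj, hij⟩

variable {lam : ℝ} {x : Fin n → ℝ}

theorem exists_strictSet_ssubset (hA : ∀ i idx, 0 ≤ A i idx) (hx : ∀ i, 0 < x i)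
    (hle : ∀ i, tApply A x i ≤ lam * x i ^ m') {i j : Fin n} (hj : j ∈ strictSet A lam x)
    (hi : i ∉ strictSet A lam x) (hij : major A i j ≠ 0) :
    ∃ y : Fin n → ℝ, (∀ k, 0 < y k) ∧ (∀ k, tApply A y k ≤ lam * y k ^ m') ∧
      strictSet A lam x ⊂ strictSet A lam y := by
  rw [mem_strictSet] at hj
  have hL : 0 < lam * x j ^ m' := (tApply_nonneg hA (fun k => (hx k).le) j).trans_lt hj
  obtain ⟨s, hs0, hs1, hs⟩ := exists_pos_lt_one_lt_pow ((div_lt_one hL).2 hj) m'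
  set y := Function.update x j (s * x j)
  have hyj : y j = s * x j := Function.update_self ..
  have hyk : ∀ k ≠ j, y k = x k := fun k hk => Function.update_of_ne hk ..
  have hsx : s * x j < x j := mul_lt_of_lt_one_left (hx j) hs1
  have hy : ∀ k, 0 < y k := fun k => by
    rcases eq_or_ne k j with rfl | hk
    · exact hyj ▸ mul_pos hs0 (hx k)
    · exact hyk k hk ▸ hx k
  have hyx : ∀ k, y k ≤ x k := fun k => by
    rcases eq_or_ne k j with rfl | hk
    · exact hyj ▸ hsx.le
    · exact (hyk k hk).le
  have hmono : ∀ k, tApply A y k ≤ tApply A x k := tApply_mono hA (fun k => (hy k).le) hyx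
  -- the shrunk coordinate stays strict because `s ^ m'` exceeds `(A x^{m-1})_j / (λ x_j^{m-1})`
  have hyj_lt : tApply A y j < lam * y j ^ m' :=
    calc tApply A y j ≤ tApply A x j := hmono j
      _ < s ^ m' * (lam * x j ^ m') := (div_lt_iff₀ hL).1 hs
      _ = lam * y j ^ m' := by rw [hyj, mul_pow]; ring
  have hrhs : ∀ k ≠ j, lam * x k ^ m' = lam * y k ^ m' := fun k hk => by rw [hyk k hk]
  have hij' : i ≠ j := fun h => hi (h ▸ mem_strictSet.2 hj)
  have hyi_lt : tApply A y i < lam * y i ^ m' :=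
    calc tApply A y i < tApply A x i :=
          tApply_lt_of_major_ne_zero hA hy hyx (hyj ▸ hsx) hij
      _ ≤ lam * x i ^ m' := hle i
      _ = lam * y i ^ m' := hrhs i hij'
  refine ⟨y, hy, fun k => ?_, ssubset_iff_of_subset (fun k hk => ?_) |>.2
    ⟨i, mem_strictSet.2 hyi_lt, hi⟩⟩
  · rcases eq_or_ne k j with rfl | hk
    · exact hyj_lt.le
    · exact (hmono k).trans ((hle k).trans_eq (hrhs k hk))
  · rw [mem_strictSet] at hk ⊢
    rcases eq_or_ne k j with rfl | hkj
    · exact hyj_lt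
    · exact (hmono k).trans_lt (hk.trans_eq (hrhs k hkj))

theorem exists_pos_forall_tApply_lt (hA : ∀ i idx, 0 ≤ A i idx) (hirr : WeaklyIrred A)
    (hx : ∀ i, 0 < x i) (hle : ∀ i, tApply A x i ≤ lam * x i ^ m')
    (hS : (strictSet A lam x).Nonempty) :
    ∃ y : Fin n → ℝ, (∀ i, 0 < y i) ∧ ∀ i, tApply A y i < lam * y i ^ m' := by
  induction hk : (strictSet A lam x)ᶜ.card using Nat.strong_induction_on generalizing x with
  | _ k ih =>
    by_cases hSu : strictSet A lam x = univ
    · exact ⟨x, hx, fun i => mem_strictSet.1 (hSu ▸ mem_univ i)⟩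
    obtain ⟨i, hi, j, hj, hij⟩ := hirr.exists_major_ne_zero hS hSu
    obtain ⟨y, hy, hyle, hxy⟩ := exists_strictSet_ssubset hA hx hle hj hi hij
    exact ih _ (hk ▸ card_lt_card (compl_ssubset_compl.2 hxy)) hy hyle (hS.mono hxy.subset) rfl

theorem IsEig.norm_le (hA : ∀ i idx, 0 ≤ A i idx) {y : Fin n → ℝ} (hy : ∀ i, 0 < y i) {c : ℝ}
    (hc : ∀ i, tApply A y i ≤ c * y i ^ m') {μ : ℂ} (hμ : IsEig A μ) : ‖μ‖ ≤ c := by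
  obtain ⟨z, hz0, hz⟩ := hμ
  obtain ⟨k, hk⟩ := Function.ne_iff.mp hz0
  have : Nonempty (Fin n) := ⟨k⟩
  obtain ⟨i, -, hmax⟩ := exists_max_image univ (fun i => ‖z i‖ / y i) univ_nonempty
  set t := ‖z i‖ / y i
  have ht : 0 < t := (div_pos (norm_pos_iff.2 hk) (hy k)).trans_le (hmax k (mem_univ k))
  have hzt : ∀ k, ‖z k‖ ≤ (t • y) k := fun k => (div_le_iff₀ (hy k)).1 (hmax k (mem_univ k))
  have hzi : ‖z i‖ = t * y i := (div_mul_cancel₀ _ (hy i).ne').symm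
  have key : ‖μ‖ * (t * y i) ^ m' ≤ c * (t * y i) ^ m' :=
    calc ‖μ‖ * (t * y i) ^ m' = ‖tApplyC A z i‖ := by rw [hz i, norm_mul, norm_pow, hzi]
      _ ≤ tApply A (fun k => ‖z k‖) i := norm_tApplyC_le hA z i
      _ ≤ tApply A (t • y) i := tApply_mono hA (fun _ => norm_nonneg _) hzt i
      _ = t ^ m' * tApply A y i := tApply_smul t y i
      _ ≤ t ^ m' * (c * y i ^ m') := mul_le_mul_of_nonneg_left (hc i) (pow_nonneg ht.le _)
      _ = c * (t * y i) ^ m' := by ring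
  exact le_of_mul_le_mul_right key (pow_pos (mul_pos ht (hy i)) _)

theorem specRad_le (hA : ∀ i idx, 0 ≤ A i idx) {y : Fin n → ℝ} (hy : ∀ i, 0 < y i) {c : ℝ}
    (hc0 : 0 ≤ c) (hc : ∀ i, tApply A y i ≤ c * y i ^ m') : specRad A ≤ c :=
  Real.sSup_le (by rintro r ⟨μ, hμ, rfl⟩; exact hμ.norm_le hA hy hc) hc0

end Tensor

theorem strict_subinvariance_general {n m' : ℕ}
    (A : Fin n → (Fin m' → Fin n) → ℝ)
    (hA : ∀ i idx, 0 ≤ A i idx)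
    (hirr : WeaklyIrred A)
    (lam : ℝ) (hlam : 0 < lam)
    (x : Fin n → ℝ) (hx : ∀ i, 0 < x i)
    (hle : ∀ i, tApply A x i ≤ lam * x i ^ m')
    (hstrict : ∃ i, tApply A x i < lam * x i ^ m') :
    (∃ y : Fin n → ℝ, (∀ i, 0 < y i) ∧ ∀ i, tApply A y i < lam * y i ^ m') ∧
      specRad A < lam := by
  obtain ⟨i, hi⟩ := hstrict
  obtain ⟨y, hy, hys⟩ := exists_pos_forall_tApply_lt hA hirr hx hle ⟨i, mem_strictSet.2 hi⟩
  obtain ⟨c, hc0, hclt, hc⟩ := exists_le_lt_forall_le hlam fun i =>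
    (div_lt_iff₀ (pow_pos (hy i) m')).2 (hys i)
  have hyc : ∀ i, tApply A y i ≤ c * y i ^ m' := fun i =>
    (div_le_iff₀ (pow_pos (hy i) m')).1 (hc i)
  exact ⟨⟨y, hy, hys⟩, (specRad_le hA hy hc0 hyc).trans_lt hclt⟩

/-- a positive sub-invariant vector with one strict inequality yields a strictly
sub-invariant positive vector, whence `ρ(A) < λ`. -/
theorem strict_subinvariance {n m' : ℕ} (hm : 1 ≤ m') (hn : 1 ≤ n)
    (A : Fin n → (Fin m' → Fin n) → ℝ)
    (hA : ∀ i idx, 0 ≤ A i idx)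
    (hirr : WeaklyIrred A)
    (lam : ℝ) (hlam : 0 < lam)
    (x : Fin n → ℝ) (hx : ∀ i, 0 < x i)
    (hle : ∀ i, tApply A x i ≤ lam * x i ^ m')
    (hstrict : ∃ i, tApply A x i < lam * x i ^ m') :
    (∃ y : Fin n → ℝ, (∀ i, 0 < y i) ∧ ∀ i, tApply A y i < lam * y i ^ m') ∧
      specRad A < lam :=
  strict_subinvariance_general A hA hirr lam hlam x hx hle hstrict
end
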